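/- arXiv:1109.0225 — 4 statements merged into one kernel-verified Lean document; each statement's English description precedes it below -/
import Mathlib

section
/- Let Λ₁, Λ₂ be finite nonempty outcome sets, S₁, S₂ ≥ 1 numbers of settings, and for each pair (s₁,s₂) ∈ {1,…,S₁}×{1,…,S₂} let P_{(s₁,s₂)} : Λ₁ × Λ₂ → ℝ≥0 be a probability distribution. Suppose the one-party marginals are consistent: for all s₁, the marginal ∑_{λ₂} P_{(s₁,s₂)}(λ₁,λ₂) is independent of s₂ (call it P_{s₁}(λ₁)), and for all s₂, the marginal ∑_{λ₁} P_{(s₁,s₂)}(λ₁,λ₂) is independent of s₁ (call it P_{s₂}(λ₂)). Then there exists a signed measure (a real-valued function) μ on Λ₁^{S₁} × Λ₂^{S₂} with total mass 1 such that for every (s₁,s₂), the marginal of μ on the coordinates (s₁-th copy of Λ₁, s₂-th copy of Λ₂) equals P_{(s₁,s₂)}. -/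
/-! By nonsignaling, the one-party marginals `p₁ s₁` and `p₂ s₂` of the `P s₁ s₂` are well
defined. Start from the product measure of all of them, whose `(s₁, s₂)`-marginal is
`p₁ s₁ ⊗ p₂ s₂`, and add, for every pair of settings, the correction `P s₁ s₂ - p₁ s₁ ⊗ p₂ s₂`
placed on the coordinates `(s₁, s₂)` and extended by the product of the `p`'s elsewhere. The
correction has vanishing row and column sums, so it is invisible in the marginal on any other
pair of coordinates; hence the `(s₁, s₂)`-marginal of the total is exactly `P s₁ s₂`. -/

open Finset

section OneParty
variable {ι α R : Type*} [Fintype ι] [DecidableEq ι] [Fintype α] [DecidableEq α] [CommSemiring R]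

theorem sum_filter_prod_apply (f : ι → α → R) (s : ι) (a : α) :
    ∑ x ∈ univ.filter (fun x : ι → α => x s = a), ∏ t, f t (x t)
      = f s a * ∏ t ∈ univ.erase s, ∑ c, f t c := by
  have hfilter := Fintype.piFinset_update_singleton_eq_filter_piFinset_eq
    (fun _ : ι => (univ : Finset α)) s (mem_univ a)
  rw [Fintype.piFinset_univ] at hfilter
  rw [← hfilter, ← prod_univ_sum, ← mul_prod_erase univ _ (mem_univ s)]
  congr 1
  · simp
  · exact prod_congr rfl fun t ht => by rw [Function.update_of_ne (ne_of_mem_erase ht)]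

theorem sum_filter_apply_mul_prod_erase {p : ι → α → R} (hp : ∀ t, ∑ c, p t c = 1)
    (h : α → R) (s s' : ι) (a : α) :
    ∑ x ∈ univ.filter (fun x : ι → α => x s = a), h (x s') * ∏ t ∈ univ.erase s', p t (x t)
      = if s' = s then h a else p s a * ∑ c, h c := by
  have hupdate (x : ι → α) : h (x s') * ∏ t ∈ univ.erase s', p t (x t)
      = ∏ t, Function.update p s' h t (x t) := by
    rw [← mul_prod_erase univ _ (mem_univ s'), Function.update_self]
    exact congrArg _ <| prod_congr rfl fun t ht => by
      rw [Function.update_of_ne (ne_of_mem_erase ht)]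
  simp_rw [hupdate, sum_filter_prod_apply]
  split_ifs with hs
  · subst hs
    rw [Function.update_self, prod_eq_one fun t ht => ?_, mul_one]
    rw [Function.update_of_ne (ne_of_mem_erase ht), hp]
  · rw [Function.update_of_ne (Ne.symm hs),
      prod_eq_single_of_mem s' (mem_erase.2 ⟨hs, mem_univ _⟩) fun t ht hts => ?_,
      Function.update_self]
    rw [Function.update_of_ne hts, hp]

theorem sum_filter_prod_apply_of_sum_eq_one {p : ι → α → R} (hp : ∀ t, ∑ c, p t c = 1)
    (s : ι) (a : α) :
    ∑ x ∈ univ.filter (fun x : ι → α => x s = a), ∏ t, p t (x t) = p s a := by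
  rw [sum_filter_prod_apply, prod_eq_one fun t _ => hp t, mul_one]

end OneParty

section TwoParty
variable {ι₁ ι₂ α β R : Type*} [Fintype ι₁] [DecidableEq ι₁] [Fintype ι₂] [DecidableEq ι₂]
  [Fintype α] [DecidableEq α] [Fintype β] [DecidableEq β]

def pairMarginal [AddCommMonoid R] (μ : (ι₁ → α) × (ι₂ → β) → R) (s₁ : ι₁) (s₂ : ι₂)
    (a : α) (b : β) : R :=
  ∑ ω ∈ univ.filter (fun ω : (ι₁ → α) × (ι₂ → β) => ω.1 s₁ = a ∧ ω.2 s₂ = b), μ ω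

section AddCommMonoid
variable [AddCommMonoid R]

theorem pairMarginal_eq_sum_sum (μ : (ι₁ → α) × (ι₂ → β) → R) (s₁ : ι₁) (s₂ : ι₂) (a : α)
    (b : β) :
    pairMarginal μ s₁ s₂ a b = ∑ x ∈ univ.filter (fun x : ι₁ → α => x s₁ = a),
      ∑ y ∈ univ.filter (fun y : ι₂ → β => y s₂ = b), μ (x, y) := by
  rw [pairMarginal, ← univ_product_univ,
    filter_product (fun x : ι₁ → α => x s₁ = a) (fun y : ι₂ → β => y s₂ = b), sum_product]

theorem sum_sum_pairMarginal (μ : (ι₁ → α) × (ι₂ → β) → R) (s₁ : ι₁) (s₂ : ι₂) :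
    ∑ a, ∑ b, pairMarginal μ s₁ s₂ a b = ∑ ω, μ ω := by
  rw [← sum_fiberwise univ (fun ω => (ω.1 s₁, ω.2 s₂)) μ, Fintype.sum_prod_type]
  simp only [pairMarginal, Prod.ext_iff]

theorem pairMarginal_add (μ ν : (ι₁ → α) × (ι₂ → β) → R) (s₁ : ι₁) (s₂ : ι₂) :
    pairMarginal (μ + ν) s₁ s₂ = pairMarginal μ s₁ s₂ + pairMarginal ν s₁ s₂ := by
  ext a b
  exact sum_add_distrib

theorem pairMarginal_sum {κ : Type*} (t : Finset κ) (μ : κ → (ι₁ → α) × (ι₂ → β) → R)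
    (s₁ : ι₁) (s₂ : ι₂) :
    pairMarginal (∑ k ∈ t, μ k) s₁ s₂ = ∑ k ∈ t, pairMarginal (μ k) s₁ s₂ := by
  ext a b
  simp only [pairMarginal, Finset.sum_apply]
  exact sum_comm

end AddCommMonoid

section CommSemiring
variable [CommSemiring R]

def prodMeasure (p₁ : ι₁ → α → R) (p₂ : ι₂ → β → R) (ω : (ι₁ → α) × (ι₂ → β)) : R :=
  (∏ t, p₁ t (ω.1 t)) * ∏ t, p₂ t (ω.2 t)

def extendByProd (p₁ : ι₁ → α → R) (p₂ : ι₂ → β → R) (s₁ : ι₁) (s₂ : ι₂) (q : α → β → R)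
    (ω : (ι₁ → α) × (ι₂ → β)) : R :=
  q (ω.1 s₁) (ω.2 s₂) * (∏ t ∈ univ.erase s₂, p₂ t (ω.2 t)) * ∏ t ∈ univ.erase s₁, p₁ t (ω.1 t)

variable {p₁ : ι₁ → α → R} {p₂ : ι₂ → β → R}

theorem pairMarginal_prodMeasure (hp₁ : ∀ t, ∑ a, p₁ t a = 1) (hp₂ : ∀ t, ∑ b, p₂ t b = 1)
    (s₁ : ι₁) (s₂ : ι₂) (a : α) (b : β) :
    pairMarginal (prodMeasure p₁ p₂) s₁ s₂ a b = p₁ s₁ a * p₂ s₂ b := by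
  rw [pairMarginal_eq_sum_sum]
  simp only [prodMeasure]
  rw [← sum_mul_sum, sum_filter_prod_apply_of_sum_eq_one hp₁,
    sum_filter_prod_apply_of_sum_eq_one hp₂]

theorem pairMarginal_extendByProd (hp₁ : ∀ t, ∑ a, p₁ t a = 1) (hp₂ : ∀ t, ∑ b, p₂ t b = 1)
    {q : α → β → R} (hrow : ∀ a, ∑ b, q a b = 0) (hcol : ∀ b, ∑ a, q a b = 0)
    (s₁ s₁' : ι₁) (s₂ s₂' : ι₂) (a : α) (b : β) :
    pairMarginal (extendByProd p₁ p₂ s₁' s₂' q) s₁ s₂ a b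
      = if s₁' = s₁ then (if s₂' = s₂ then q a b else 0) else 0 := by
  rw [pairMarginal_eq_sum_sum]
  simp only [extendByProd, ← sum_mul, sum_filter_apply_mul_prod_erase hp₂, hrow, mul_zero]
  by_cases hs₂ : s₂' = s₂
  · simp only [if_pos hs₂]
    rw [sum_filter_apply_mul_prod_erase hp₁ (q · b), hcol, mul_zero]
  · simp only [if_neg hs₂, zero_mul, sum_const_zero, ite_self]

end CommSemiring

theorem exists_pairMarginal_eq [CommRing R] [Nonempty ι₁] [Nonempty ι₂]
    (P : ι₁ → ι₂ → α → β → R) (hnorm : ∀ s₁ s₂, ∑ a, ∑ b, P s₁ s₂ a b = 1)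
    (hns1 : ∀ s₁ s₂ s₂' a, ∑ b, P s₁ s₂ a b = ∑ b, P s₁ s₂' a b)
    (hns2 : ∀ s₁ s₁' s₂ b, ∑ a, P s₁ s₂ a b = ∑ a, P s₁' s₂ a b) :
    ∃ μ : (ι₁ → α) × (ι₂ → β) → R,
      ∑ ω, μ ω = 1 ∧ ∀ s₁ s₂, pairMarginal μ s₁ s₂ = P s₁ s₂ := by
  obtain ⟨z₁⟩ := ‹Nonempty ι₁›
  obtain ⟨z₂⟩ := ‹Nonempty ι₂›
  set p₁ : ι₁ → α → R := fun s₁ a => ∑ b, P s₁ z₂ a b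
  set p₂ : ι₂ → β → R := fun s₂ b => ∑ a, P z₁ s₂ a b
  have hp₁ (t : ι₁) : ∑ a, p₁ t a = 1 := hnorm t z₂
  have hp₂ (t : ι₂) : ∑ b, p₂ t b = 1 := by rw [sum_comm]; exact hnorm z₁ t
  set q : ι₁ → ι₂ → α → β → R := fun s₁ s₂ a b => P s₁ s₂ a b - p₁ s₁ a * p₂ s₂ b
  have hrow (s₁ s₂ a) : ∑ b, q s₁ s₂ a b = 0 := by
    simp only [q, sum_sub_distrib, ← mul_sum, hp₂, mul_one, hns1 s₁ s₂ z₂ a, p₁, sub_self]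
  have hcol (s₁ s₂ b) : ∑ a, q s₁ s₂ a b = 0 := by
    simp only [q, sum_sub_distrib, ← sum_mul, hp₁, one_mul, hns2 s₁ z₁ s₂ b, p₂, sub_self]
  set μ := prodMeasure p₁ p₂ + ∑ s₁, ∑ s₂, extendByProd p₁ p₂ s₁ s₂ (q s₁ s₂)
  have hμ (s₁ s₂) : pairMarginal μ s₁ s₂ = P s₁ s₂ := by
    ext a b
    simp only [μ, pairMarginal_add, pairMarginal_sum, Pi.add_apply, Finset.sum_apply,
      pairMarginal_prodMeasure hp₁ hp₂, pairMarginal_extendByProd hp₁ hp₂ (hrow _ _) (hcol _ _),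
      sum_ite_irrel, sum_const_zero, Fintype.sum_ite_eq', q]
    ring
  refine ⟨μ, ?_, hμ⟩
  rw [← sum_sum_pairMarginal μ z₁ z₂, hμ]
  exact hnorm z₁ z₂

end TwoParty

theorem bipartite_nonsignaling_master_measure_general
    {Λ₁ Λ₂ : Type*} [Fintype Λ₁] [Fintype Λ₂] [DecidableEq Λ₁] [DecidableEq Λ₂]
    {S₁ S₂ : ℕ} (hS₁ : 1 ≤ S₁) (hS₂ : 1 ≤ S₂)
    (P : Fin S₁ → Fin S₂ → Λ₁ → Λ₂ → ℝ)
    (hnorm : ∀ s₁ s₂, ∑ a, ∑ b, P s₁ s₂ a b = 1)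
    (hns1 : ∀ s₁ s₂ s₂' a, ∑ b, P s₁ s₂ a b = ∑ b, P s₁ s₂' a b)
    (hns2 : ∀ s₁ s₁' s₂ b, ∑ a, P s₁ s₂ a b = ∑ a, P s₁' s₂ a b) :
    ∃ μ : (Fin S₁ → Λ₁) × (Fin S₂ → Λ₂) → ℝ,
      (∑ ω, μ ω) = 1 ∧
      ∀ s₁ s₂ a b,
        (∑ ω ∈ Finset.univ.filter (fun ω : (Fin S₁ → Λ₁) × (Fin S₂ → Λ₂) =>
            ω.1 s₁ = a ∧ ω.2 s₂ = b), μ ω) = P s₁ s₂ a b := by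
  have : Nonempty (Fin S₁) := ⟨⟨0, hS₁⟩⟩
  have : Nonempty (Fin S₂) := ⟨⟨0, hS₂⟩⟩
  obtain ⟨μ, hmass, hmarg⟩ := exists_pairMarginal_eq P hnorm hns1 hns2
  exact ⟨μ, hmass, fun s₁ s₂ a b => congrFun₂ (hmarg s₁ s₂) a b⟩

/-- Bipartite nonsignaling scenarios admit a master signed measure. -/
theorem bipartite_nonsignaling_master_measure
    {Λ₁ Λ₂ : Type*} [Fintype Λ₁] [Fintype Λ₂] [DecidableEq Λ₁] [DecidableEq Λ₂]
    [Nonempty Λ₁] [Nonempty Λ₂] {S₁ S₂ : ℕ} (hS₁ : 1 ≤ S₁) (hS₂ : 1 ≤ S₂)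
    (P : Fin S₁ → Fin S₂ → Λ₁ → Λ₂ → ℝ)
    (hpos : ∀ s₁ s₂ a b, 0 ≤ P s₁ s₂ a b)
    (hnorm : ∀ s₁ s₂, ∑ a, ∑ b, P s₁ s₂ a b = 1)
    (hns1 : ∀ s₁ s₂ s₂' a, ∑ b, P s₁ s₂ a b = ∑ b, P s₁ s₂' a b)
    (hns2 : ∀ s₁ s₁' s₂ b, ∑ a, P s₁ s₂ a b = ∑ a, P s₁' s₂ a b) :
    ∃ μ : (Fin S₁ → Λ₁) × (Fin S₂ → Λ₂) → ℝ,
      (∑ ω, μ ω) = 1 ∧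
      ∀ s₁ s₂ a b,
        (∑ ω ∈ Finset.univ.filter (fun ω : (Fin S₁ → Λ₁) × (Fin S₂ → Λ₂) =>
            ω.1 s₁ = a ∧ ω.2 s₂ = b), μ ω) = P s₁ s₂ a b :=
  bipartite_nonsignaling_master_measure_general hS₁ hS₂ P hnorm hns1 hns2
end

section
/- Let Λ₁, Λ₂, Λ₃ be finite nonempty sets and P_{(s₁,s₂,s₃)} probability distributions on Λ₁ × Λ₂ × Λ₃ for sₙ ∈ {1,…,Sₙ} satisfying the full consistency condition: every marginal obtained by summing out any subset of parties depends only on the settings of the remaining parties in the sense that it is unchanged when the settings of the summed-out parties are changed. Then there exists a real-valued function μ̃ on Λ₁^{S₁} × Λ₂^{S₂} × Λ₃^{S₃} summing to 1 such that for every triple (s₁,s₂,s₃), the marginal of μ̃ on coordinates (s₁, s₂, s₃) equals P_{(s₁,s₂,s₃)}. -/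
/-!
For a single party, a family `f s` of functions on `Λ` (one per setting `s`) with a common total
mass `m` is the family of one-setting marginals of an explicit signed function on `ι → Λ`: the
product `m • u^⊗ι` of a probability vector `u`, corrected at each setting by the mass-zero
function `f s - m • u` placed in that coordinate. This lift is linear in `f`.

For three parties, lift in each party in turn. Because the lift is linear, the total mass of an
intermediate family in one party is the lift of `P` summed over that party's outcome, and the
two-party nonsignaling conditions say exactly that this does not depend on the party's setting.
-/

open Finset

section OneParty

variable {ι Λ : Type*} [Fintype ι] [DecidableEq ι] [Fintype Λ]

def marginalLift (u : Λ → ℝ) (o : ι) : (ι → Λ → ℝ) →ₗ[ℝ] (ι → Λ) → ℝ where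
  toFun f A := (∑ x, f o x) * ∏ t, u (A t)
    + ∑ s, (f s (A s) - (∑ x, f o x) * u (A s)) * ∏ t ∈ univ.erase s, u (A t)
  map_add' f g := by
    ext A
    simp only [Pi.add_apply, sum_add_distrib, add_mul, sub_mul, sum_sub_distrib]
    ring
  map_smul' c f := by
    ext A
    simp only [Pi.smul_apply, smul_eq_mul, ← mul_sum, RingHom.id_apply, mul_assoc, ← mul_sub,
      mul_add]

theorem sum_marginalLift_apply {κ : Type*} [Fintype κ] (u : Λ → ℝ) (o : ι)
    (f : κ → ι → Λ → ℝ) (A : ι → Λ) :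
    ∑ k, marginalLift u o (f k) A = marginalLift u o (fun s x => ∑ k, f k s x) A := by
  rw [← Finset.sum_apply, ← map_sum]
  simp only [Finset.sum_fn]

variable [DecidableEq Λ]

def marginal (μ : (ι → Λ) → ℝ) (s : ι) (a : Λ) : ℝ :=
  ∑ A with A s = a, μ A

theorem marginal_prod (h : ι → Λ → ℝ) (σ : ι) (a : Λ) :
    marginal (fun A => ∏ t, h t (A t)) σ a = h σ a * ∏ t ∈ univ.erase σ, ∑ x, h t x := by
  rw [marginal, ← Fintype.piFinset_univ,
    ← Fintype.piFinset_update_singleton_eq_filter_piFinset_eq (fun _ => univ) σ (mem_univ a),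
    ← prod_univ_sum, ← mul_prod_erase _ _ (mem_univ σ)]
  simp only [Function.update_self, sum_singleton]
  congr 1
  exact prod_congr rfl fun t ht => by rw [Function.update_of_ne (ne_of_mem_erase ht)]

variable {u : Λ → ℝ}

theorem marginal_mul_prod_erase (hu : ∑ x, u x = 1) (g : Λ → ℝ) (s σ : ι) (a : Λ) :
    marginal (fun A => g (A s) * ∏ t ∈ univ.erase s, u (A t)) σ a
      = if σ = s then g a else u a * ∑ x, g x := by
  have hupdate : ∀ A : ι → Λ, g (A s) * ∏ t ∈ univ.erase s, u (A t)
      = ∏ t, Function.update (fun _ => u) s g t (A t) := by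
    intro A
    rw [← mul_prod_erase _ _ (mem_univ s), Function.update_self]
    congr 1
    exact prod_congr rfl fun t ht => by rw [Function.update_of_ne (ne_of_mem_erase ht)]
  simp only [hupdate, marginal_prod]
  split_ifs with hσ
  · subst hσ
    rw [Function.update_self, prod_eq_one, mul_one]
    intro t ht
    rw [Function.update_of_ne (ne_of_mem_erase ht), hu]
  · rw [Function.update_of_ne hσ,
      ← mul_prod_erase _ _ (mem_erase.2 ⟨Ne.symm hσ, mem_univ s⟩), Function.update_self,
      prod_eq_one, mul_one]
    intro t ht
    rw [Function.update_of_ne (ne_of_mem_erase ht), hu]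

theorem marginal_marginalLift (hu : ∑ x, u x = 1) {o : ι} (f : ι → Λ → ℝ)
    (hf : ∀ s, ∑ x, f s x = ∑ x, f o x) (σ : ι) (a : Λ) :
    marginal (marginalLift u o f) σ a = f σ a := by
  set m := ∑ x, f o x
  have hproduct : marginal (fun A => ∏ t, u (A t)) σ a = u a := by
    rw [marginal_prod, prod_eq_one fun t _ => hu, mul_one]
  have hcorrection : ∀ s, marginal
      (fun A => (f s (A s) - m * u (A s)) * ∏ t ∈ univ.erase s, u (A t)) σ a
        = if σ = s then f σ a - m * u a else 0 := by
    intro s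
    rw [marginal_mul_prod_erase hu (fun x => f s x - m * u x)]
    split_ifs with hσ
    · rw [hσ]
    · rw [sum_sub_distrib, ← mul_sum, hu, hf, mul_one, sub_self, mul_zero]
  calc marginal (marginalLift u o f) σ a
      = m * marginal (fun A => ∏ t, u (A t)) σ a + ∑ s, marginal
          (fun A => (f s (A s) - m * u (A s)) * ∏ t ∈ univ.erase s, u (A t)) σ a := by
        simp only [marginal, marginalLift, LinearMap.coe_mk, AddHom.coe_mk, sum_add_distrib,
          mul_sum]
        rw [sum_comm]
    _ = f σ a := by
        rw [hproduct]
        simp only [hcorrection, sum_ite_eq, mem_univ, if_true]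
        ring

end OneParty

section ThreeParties

variable {ι₁ ι₂ ι₃ Λ₁ Λ₂ Λ₃ : Type*} [Fintype ι₁] [Fintype ι₂] [Fintype ι₃]
  [DecidableEq ι₁] [DecidableEq ι₂] [DecidableEq ι₃] [Fintype Λ₁] [Fintype Λ₂] [Fintype Λ₃]
  [DecidableEq Λ₁] [DecidableEq Λ₂] [DecidableEq Λ₃]

def marginal₃ (μ : (ι₁ → Λ₁) × (ι₂ → Λ₂) × (ι₃ → Λ₃) → ℝ) (s₁ : ι₁) (s₂ : ι₂) (s₃ : ι₃)
    (a : Λ₁) (b : Λ₂) (c : Λ₃) : ℝ :=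
  ∑ ω with ω.1 s₁ = a ∧ ω.2.1 s₂ = b ∧ ω.2.2 s₃ = c, μ ω

theorem marginal₃_eq_marginal (μ : (ι₁ → Λ₁) × (ι₂ → Λ₂) × (ι₃ → Λ₃) → ℝ) (s₁ : ι₁) (s₂ : ι₂)
    (s₃ : ι₃) (a : Λ₁) (b : Λ₂) (c : Λ₃) :
    marginal₃ μ s₁ s₂ s₃ a b c
      = marginal (fun A => marginal (fun B => marginal (fun C => μ (A, B, C)) s₃ c) s₂ b) s₁ a := by
  simp only [marginal₃, marginal, sum_filter, Fintype.sum_prod_type, ite_and, sum_ite_irrel,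
    sum_const_zero]

theorem sum_marginal₃ (μ : (ι₁ → Λ₁) × (ι₂ → Λ₂) × (ι₃ → Λ₃) → ℝ) (s₁ : ι₁) (s₂ : ι₂)
    (s₃ : ι₃) : ∑ a, ∑ b, ∑ c, marginal₃ μ s₁ s₂ s₃ a b c = ∑ ω, μ ω := by
  rw [← sum_fiberwise univ (fun ω => (ω.1 s₁, ω.2.1 s₂, ω.2.2 s₃)) μ]
  simp only [Fintype.sum_prod_type, marginal₃, Prod.ext_iff]

def marginalLift₃ (u₁ : Λ₁ → ℝ) (u₂ : Λ₂ → ℝ) (u₃ : Λ₃ → ℝ) (o₁ : ι₁) (o₂ : ι₂) (o₃ : ι₃)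
    (P : ι₁ → ι₂ → ι₃ → Λ₁ → Λ₂ → Λ₃ → ℝ) (ω : (ι₁ → Λ₁) × (ι₂ → Λ₂) × (ι₃ → Λ₃)) : ℝ :=
  marginalLift u₃ o₃ (fun s₃ z => marginalLift u₂ o₂ (fun s₂ y =>
    marginalLift u₁ o₁ (fun s₁ x => P s₁ s₂ s₃ x y z) ω.1) ω.2.1) ω.2.2

theorem marginal₃_marginalLift₃ {u₁ : Λ₁ → ℝ} {u₂ : Λ₂ → ℝ} {u₃ : Λ₃ → ℝ}
    (hu₁ : ∑ x, u₁ x = 1) (hu₂ : ∑ y, u₂ y = 1) (hu₃ : ∑ z, u₃ z = 1)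
    (o₁ : ι₁) (o₂ : ι₂) (o₃ : ι₃) {P : ι₁ → ι₂ → ι₃ → Λ₁ → Λ₂ → Λ₃ → ℝ}
    (h₁₂ : ∀ s₁ s₂ s₃ s₃' a b, ∑ c, P s₁ s₂ s₃ a b c = ∑ c, P s₁ s₂ s₃' a b c)
    (h₁₃ : ∀ s₁ s₂ s₂' s₃ a c, ∑ b, P s₁ s₂ s₃ a b c = ∑ b, P s₁ s₂' s₃ a b c)
    (h₂₃ : ∀ s₁ s₁' s₂ s₃ b c, ∑ a, P s₁ s₂ s₃ a b c = ∑ a, P s₁' s₂ s₃ a b c)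
    (σ₁ : ι₁) (σ₂ : ι₂) (σ₃ : ι₃) (a : Λ₁) (b : Λ₂) (c : Λ₃) :
    marginal₃ (marginalLift₃ u₁ u₂ u₃ o₁ o₂ o₃ P) σ₁ σ₂ σ₃ a b c = P σ₁ σ₂ σ₃ a b c := by
  have party₃ : ∀ A B, marginal (marginalLift u₃ o₃ (fun s₃ z => marginalLift u₂ o₂
      (fun s₂ y => marginalLift u₁ o₁ (fun s₁ x => P s₁ s₂ s₃ x y z) A) B)) σ₃ c
      = marginalLift u₂ o₂ (fun s₂ y => marginalLift u₁ o₁ (fun s₁ x => P s₁ s₂ σ₃ x y c) A) B :=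
    fun A B => marginal_marginalLift hu₃ _
      (fun s₃ => by simp only [sum_marginalLift_apply, h₁₂ _ _ s₃ o₃]) σ₃ c
  have party₂ : ∀ A, marginal (marginalLift u₂ o₂
      (fun s₂ y => marginalLift u₁ o₁ (fun s₁ x => P s₁ s₂ σ₃ x y c) A)) σ₂ b
      = marginalLift u₁ o₁ (fun s₁ x => P s₁ σ₂ σ₃ x b c) A :=
    fun A => marginal_marginalLift hu₂ _
      (fun s₂ => by simp only [sum_marginalLift_apply, h₁₃ _ s₂ o₂]) σ₂ b
  have party₁ : marginal (marginalLift u₁ o₁ (fun s₁ x => P s₁ σ₂ σ₃ x b c)) σ₁ a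
      = P σ₁ σ₂ σ₃ a b c :=
    marginal_marginalLift hu₁ _ (fun s₁ => h₂₃ s₁ o₁ σ₂ σ₃ b c) σ₁ a
  simp only [marginal₃_eq_marginal, marginalLift₃, party₃, party₂, party₁]

end ThreeParties

theorem tripartite_nonsignaling_master_measure_general
    {Λ₁ Λ₂ Λ₃ : Type*} [Fintype Λ₁] [Fintype Λ₂] [Fintype Λ₃]
    [DecidableEq Λ₁] [DecidableEq Λ₂] [DecidableEq Λ₃]
    {S₁ S₂ S₃ : ℕ} (hS₁ : 1 ≤ S₁) (hS₂ : 1 ≤ S₂) (hS₃ : 1 ≤ S₃)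
    (P : Fin S₁ → Fin S₂ → Fin S₃ → Λ₁ → Λ₂ → Λ₃ → ℝ)
    (hnorm : ∀ s₁ s₂ s₃, ∑ a, ∑ b, ∑ c, P s₁ s₂ s₃ a b c = 1)
    -- two-party marginals depend only on the retained settings:
    (hns12 : ∀ s₁ s₂ s₃ s₃' a b, ∑ c, P s₁ s₂ s₃ a b c = ∑ c, P s₁ s₂ s₃' a b c)
    (hns13 : ∀ s₁ s₂ s₂' s₃ a c, ∑ b, P s₁ s₂ s₃ a b c = ∑ b, P s₁ s₂' s₃ a b c)
    (hns23 : ∀ s₁ s₁' s₂ s₃ b c, ∑ a, P s₁ s₂ s₃ a b c = ∑ a, P s₁' s₂ s₃ a b c) :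
    ∃ μ : (Fin S₁ → Λ₁) × (Fin S₂ → Λ₂) × (Fin S₃ → Λ₃) → ℝ,
      (∑ ω, μ ω) = 1 ∧
      ∀ s₁ s₂ s₃ a b c,
        (∑ ω ∈ Finset.univ.filter
            (fun ω : (Fin S₁ → Λ₁) × (Fin S₂ → Λ₂) × (Fin S₃ → Λ₃) =>
              ω.1 s₁ = a ∧ ω.2.1 s₂ = b ∧ ω.2.2 s₃ = c), μ ω)
          = P s₁ s₂ s₃ a b c := by
  let o₁ : Fin S₁ := ⟨0, hS₁⟩
  let o₂ : Fin S₂ := ⟨0, hS₂⟩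
  let o₃ : Fin S₃ := ⟨0, hS₃⟩
  -- the one-party marginals of `P` at the settings `o` serve as the probability vectors `u`
  have hu₁ : ∑ x, ∑ y, ∑ z, P o₁ o₂ o₃ x y z = 1 := hnorm o₁ o₂ o₃
  have hu₂ : ∑ y, ∑ x, ∑ z, P o₁ o₂ o₃ x y z = 1 := by rw [sum_comm, hu₁]
  have hu₃ : ∑ z, ∑ x, ∑ y, P o₁ o₂ o₃ x y z = 1 := by
    rw [sum_comm, ← hu₁]
    exact sum_congr rfl fun x _ => sum_comm
  have hmarginal := marginal₃_marginalLift₃ hu₁ hu₂ hu₃ o₁ o₂ o₃ hns12 hns13 hns23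
  refine ⟨marginalLift₃ _ _ _ o₁ o₂ o₃ P, ?_, hmarginal⟩
  rw [← sum_marginal₃ _ o₁ o₂ o₃]
  simp only [hmarginal, hu₁]

/-- a tripartite scenario satisfying the full consistency (general
nonsignaling) condition admits a master signed measure returning all its joint
distributions as marginals. -/
theorem tripartite_nonsignaling_master_measure
    {Λ₁ Λ₂ Λ₃ : Type*} [Fintype Λ₁] [Fintype Λ₂] [Fintype Λ₃]
    [DecidableEq Λ₁] [DecidableEq Λ₂] [DecidableEq Λ₃]
    [Nonempty Λ₁] [Nonempty Λ₂] [Nonempty Λ₃]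
    {S₁ S₂ S₃ : ℕ} (hS₁ : 1 ≤ S₁) (hS₂ : 1 ≤ S₂) (hS₃ : 1 ≤ S₃)
    (P : Fin S₁ → Fin S₂ → Fin S₃ → Λ₁ → Λ₂ → Λ₃ → ℝ)
    (hpos : ∀ s₁ s₂ s₃ a b c, 0 ≤ P s₁ s₂ s₃ a b c)
    (hnorm : ∀ s₁ s₂ s₃, ∑ a, ∑ b, ∑ c, P s₁ s₂ s₃ a b c = 1)
    -- two-party marginals depend only on the retained settings:
    (hns12 : ∀ s₁ s₂ s₃ s₃' a b, ∑ c, P s₁ s₂ s₃ a b c = ∑ c, P s₁ s₂ s₃' a b c)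
    (hns13 : ∀ s₁ s₂ s₂' s₃ a c, ∑ b, P s₁ s₂ s₃ a b c = ∑ b, P s₁ s₂' s₃ a b c)
    (hns23 : ∀ s₁ s₁' s₂ s₃ b c, ∑ a, P s₁ s₂ s₃ a b c = ∑ a, P s₁' s₂ s₃ a b c)
    -- one-party marginals depend only on the retained setting:
    (hns1 : ∀ s₁ s₂ s₂' s₃ s₃' a,
      ∑ b, ∑ c, P s₁ s₂ s₃ a b c = ∑ b, ∑ c, P s₁ s₂' s₃' a b c)
    (hns2 : ∀ s₁ s₁' s₂ s₃ s₃' b,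
      ∑ a, ∑ c, P s₁ s₂ s₃ a b c = ∑ a, ∑ c, P s₁' s₂ s₃' a b c)
    (hns3 : ∀ s₁ s₁' s₂ s₂' s₃ c,
      ∑ a, ∑ b, P s₁ s₂ s₃ a b c = ∑ a, ∑ b, P s₁' s₂' s₃ a b c) :
    ∃ μ : (Fin S₁ → Λ₁) × (Fin S₂ → Λ₂) × (Fin S₃ → Λ₃) → ℝ,
      (∑ ω, μ ω) = 1 ∧
      ∀ s₁ s₂ s₃ a b c,
        (∑ ω ∈ Finset.univ.filter
            (fun ω : (Fin S₁ → Λ₁) × (Fin S₂ → Λ₂) × (Fin S₃ → Λ₃) =>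
              ω.1 s₁ = a ∧ ω.2.1 s₂ = b ∧ ω.2.2 s₃ = c), μ ω)
          = P s₁ s₂ s₃ a b c :=
  tripartite_nonsignaling_master_measure_general hS₁ hS₂ hS₃ P hnorm hns12 hns13 hns23
end

section
/- Let Λ₁,…,Λ_N be finite nonempty sets and P_{(s₁,…,s_N)} probability distributions indexed by settings sₙ ∈ {1,…,Sₙ}. If the scenario admits an LqHV model — i.e., there exist a finite set Ω, a function ν : Ω → ℝ with ∑ν = 1, and conditional probability distributions Pₙ^{(sₙ)}(·|ω) on Λₙ such that P_{(s₁,…,s_N)}(λ₁,…,λ_N) = ∑_ω ∏ₙ Pₙ^{(sₙ)}(λₙ|ω) ν(ω) for all settings and outcomes — then it admits a deterministic LqHV model: there exist a finite set Ω̃, a function ν̃ : Ω̃ → ℝ with ∑ν̃ = 1, and functions f_{n,sₙ} : Ω̃ → Λₙ such that P_{(s₁,…,s_N)}(λ₁,…,λ_N) = ∑_{ω̃ : f_{n,sₙ}(ω̃)=λₙ for all n} ν̃(ω̃). -/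
/-!
Each hidden state `ω` of an LqHV model can be refined by a full table `g` assigning an outcome
`g n k` to every site `n` and every setting `k`, weighted independently by
`Pc n k ω (g n k)`. Reading the outcomes off the table is deterministic, and summing the weight
`ν ω * ∏ n, ∏ k, Pc n k ω (g n k)` over the tables with `g n (s n) = x n` recovers
`ν ω * ∏ n, Pc n (s n) ω (x n)`, because the factors of all unused settings sum to `1`.
-/

open Finset

section ProductWeights

variable {ι : Type*} [Fintype ι] [DecidableEq ι] {β : ι → Type*} [∀ i, Fintype (β i)]
  {R : Type*} [CommSemiring R]

theorem sum_prod_eq_one_of_sum_eq_one (p : ∀ i, β i → R) (hp : ∀ i, ∑ b, p i b = 1) :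
    ∑ g : ∀ i, β i, ∏ i, p i (g i) = 1 := by
  rw [← Fintype.prod_sum]
  simp [hp]

variable [∀ i, DecidableEq (β i)]

theorem sum_filter_forall_mem_prod (p : ∀ i, β i → R) (A : ∀ i, Finset (β i)) :
    ∑ g ∈ univ.filter (fun g : ∀ i, β i => ∀ i, g i ∈ A i), ∏ i, p i (g i) =
      ∏ i, ∑ b ∈ A i, p i b := by
  rw [prod_univ_sum]
  congr 1
  ext g
  simp [Fintype.mem_piFinset]

theorem sum_filter_apply_eq_prod (p : ∀ i, β i → R) (hp : ∀ i, ∑ b, p i b = 1) (i : ι)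
    (a : β i) :
    ∑ g ∈ univ.filter (fun g : ∀ j, β j => g i = a), ∏ j, p j (g j) = p i a := by
  have hfilter : univ.filter (fun g : ∀ j, β j => g i = a) =
      univ.filter (fun g : ∀ j, β j => ∀ j, g j ∈ Function.update (fun _ => univ) i {a} j) := by
    ext g
    simp only [mem_filter, mem_univ, true_and]
    refine ⟨fun hg j => ?_, fun hg => by simpa using hg i⟩
    rcases eq_or_ne j i with rfl | hji
    · simp [hg]
    · simp [Function.update_of_ne hji]
  rw [hfilter, sum_filter_forall_mem_prod, Fintype.prod_eq_single i]
  · simp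
  · intro j hji
    simp [Function.update_of_ne hji, hp]

end ProductWeights

section ResponseTables

variable {ι : Type*} [Fintype ι] {σ : ι → Type*} {Λ : ι → Type*} [∀ i, DecidableEq (Λ i)]

def IsDeterministicLqHV (P : (∀ i, σ i) → (∀ i, Λ i) → ℝ) {Ω : Type*} [Fintype Ω]
    (ν : Ω → ℝ) (f : ∀ i, σ i → Ω → Λ i) : Prop :=
  ∑ ω, ν ω = 1 ∧
    ∀ s x, P s x = ∑ ω ∈ univ.filter (fun ω => ∀ i, f i (s i) ω = x i), ν ω

theorem IsDeterministicLqHV.comp_equiv {P : (∀ i, σ i) → (∀ i, Λ i) → ℝ} {Ω Ω' : Type*}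
    [Fintype Ω] [Fintype Ω'] {ν : Ω → ℝ} {f : ∀ i, σ i → Ω → Λ i}
    (h : IsDeterministicLqHV P ν f) (e : Ω' ≃ Ω) :
    IsDeterministicLqHV P (fun ω => ν (e ω)) (fun i k ω => f i k (e ω)) := by
  refine ⟨by simpa [e.sum_comp] using h.1, fun s x => ?_⟩
  rw [h.2 s x, sum_filter, sum_filter, ← e.sum_comp]

variable [DecidableEq ι] [∀ i, Fintype (σ i)] [∀ i, DecidableEq (σ i)] [∀ i, Fintype (Λ i)]

theorem sum_filter_forall_apply_eq_prod_prod (p : ∀ i, σ i → Λ i → ℝ)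
    (hp : ∀ i k, ∑ a, p i k a = 1) (s : ∀ i, σ i) (x : ∀ i, Λ i) :
    ∑ g ∈ univ.filter (fun g : ∀ i, σ i → Λ i => ∀ i, g i (s i) = x i),
        ∏ i, ∏ k, p i k (g i k) = ∏ i, p i (s i) (x i) := by
  have hfilter : univ.filter (fun g : ∀ i, σ i → Λ i => ∀ i, g i (s i) = x i) =
      univ.filter (fun g : ∀ i, σ i → Λ i =>
        ∀ i, g i ∈ univ.filter (fun φ : σ i → Λ i => φ (s i) = x i)) := by
    simp
  rw [hfilter]
  exact (sum_filter_forall_mem_prod (fun i (φ : σ i → Λ i) => ∏ k, p i k (φ k)) _).trans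
    (prod_congr rfl fun i _ => sum_filter_apply_eq_prod (p i) (hp i) (s i) (x i))

def responseTableWeight {Ω : Type*} (ν : Ω → ℝ) (Pc : ∀ i, σ i → Ω → Λ i → ℝ)
    (ωg : Ω × ∀ i, σ i → Λ i) : ℝ :=
  ν ωg.1 * ∏ i, ∏ k, Pc i k ωg.1 (ωg.2 i k)

theorem isDeterministicLqHV_responseTableWeight {P : (∀ i, σ i) → (∀ i, Λ i) → ℝ}
    {Ω : Type*} [Fintype Ω] {ν : Ω → ℝ} {Pc : ∀ i, σ i → Ω → Λ i → ℝ}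
    (hν : ∑ ω, ν ω = 1) (hPc : ∀ i k ω, ∑ a, Pc i k ω a = 1)
    (hP : ∀ s x, P s x = ∑ ω, (∏ i, Pc i (s i) ω (x i)) * ν ω) :
    IsDeterministicLqHV P (responseTableWeight ν Pc) (fun i k ωg => ωg.2 i k) := by
  constructor
  · have hmass (ω : Ω) : ∑ g : ∀ i, σ i → Λ i, ∏ i, ∏ k, Pc i k ω (g i k) = 1 :=
      sum_prod_eq_one_of_sum_eq_one _ fun i =>
        sum_prod_eq_one_of_sum_eq_one (fun k => Pc i k ω) fun k => hPc i k ω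
    simp only [responseTableWeight, Fintype.sum_prod_type, ← mul_sum, hmass, mul_one, hν]
  · intro s x
    rw [hP, sum_filter, Fintype.sum_prod_type]
    refine sum_congr rfl fun ω _ => ?_
    rw [← sum_filter]
    simp only [responseTableWeight, ← mul_sum,
      sum_filter_forall_apply_eq_prod_prod (fun i k => Pc i k ω) (fun i k => hPc i k ω), mul_comm]

end ResponseTables

theorem lqhv_implies_deterministic_lqhv_general
    {N : ℕ} {S : Fin N → ℕ} {Λ : Fin N → Type*}
    [∀ n, Fintype (Λ n)] [∀ n, DecidableEq (Λ n)]
    (P : (∀ n, Fin (S n)) → (∀ n, Λ n) → ℝ)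
    (hLqHV : ∃ (Ω : Type) (_ : Fintype Ω) (ν : Ω → ℝ)
        (Pc : ∀ n, Fin (S n) → Ω → Λ n → ℝ),
      (∑ ω, ν ω) = 1 ∧
      (∀ n sn ω a, 0 ≤ Pc n sn ω a) ∧
      (∀ n sn ω, ∑ a, Pc n sn ω a = 1) ∧
      (∀ (s : ∀ n, Fin (S n)) (x : ∀ n, Λ n),
        P s x = ∑ ω, (∏ n, Pc n (s n) ω (x n)) * ν ω)) :
    ∃ (Ω' : Type) (_ : Fintype Ω') (_ : DecidableEq Ω') (ν' : Ω' → ℝ)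
        (f : ∀ n, Fin (S n) → Ω' → Λ n),
      (∑ ω, ν' ω) = 1 ∧
      ∀ (s : ∀ n, Fin (S n)) (x : ∀ n, Λ n),
        P s x = ∑ ω ∈ Finset.univ.filter (fun ω : Ω' => ∀ n, f n (s n) ω = x n), ν' ω := by
  obtain ⟨Ω, _, ν, Pc, hν, -, hPc, hP⟩ := hLqHV
  -- The table space lives in the universe of `Λ`; relabel it by `Fin` to land in `Type`.
  let e := (Fintype.equivFin (Ω × ∀ n, Fin (S n) → Λ n)).symm
  obtain ⟨hmass, hmodel⟩ := (isDeterministicLqHV_responseTableWeight hν hPc hP).comp_equiv e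
  -- `convert` reconciles the generic `Fintype` decidability of `∀ n` with `Nat.decidableForallFin`.
  exact ⟨_, inferInstance, inferInstance, _, fun n k ω => (e ω).2 n k, hmass,
    fun s x => by convert hmodel s x⟩

/-- Proposition 1 of Loubenets: an LqHV model implies a
deterministic LqHV model. -/
theorem lqhv_implies_deterministic_lqhv
    {N : ℕ} {S : Fin N → ℕ} {Λ : Fin N → Type*}
    [∀ n, Fintype (Λ n)] [∀ n, DecidableEq (Λ n)] [∀ n, Nonempty (Λ n)]
    (P : (∀ n, Fin (S n)) → (∀ n, Λ n) → ℝ)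
    (hpos : ∀ s x, 0 ≤ P s x) (hnorm : ∀ s, ∑ x, P s x = 1)
    (hLqHV : ∃ (Ω : Type) (_ : Fintype Ω) (ν : Ω → ℝ)
        (Pc : ∀ n, Fin (S n) → Ω → Λ n → ℝ),
      (∑ ω, ν ω) = 1 ∧
      (∀ n sn ω a, 0 ≤ Pc n sn ω a) ∧
      (∀ n sn ω, ∑ a, Pc n sn ω a = 1) ∧
      (∀ (s : ∀ n, Fin (S n)) (x : ∀ n, Λ n),
        P s x = ∑ ω, (∏ n, Pc n (s n) ω (x n)) * ν ω)) :
    ∃ (Ω' : Type) (_ : Fintype Ω') (_ : DecidableEq Ω') (ν' : Ω' → ℝ)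
        (f : ∀ n, Fin (S n) → Ω' → Λ n),
      (∑ ω, ν' ω) = 1 ∧
      ∀ (s : ∀ n, Fin (S n)) (x : ∀ n, Λ n),
        P s x = ∑ ω ∈ Finset.univ.filter (fun ω : Ω' => ∀ n, f n (s n) ω = x n), ν' ω :=
  lqhv_implies_deterministic_lqhv_general P hLqHV
end

section
/- Let Λ₁,…,Λ_N be finite nonempty sets with Sₙ settings per site n. The scenario distributions P_{(s₁,…,s_N)} admit a deterministic LqHV model (as defined via response functions f_{n,sₙ} : Ω → Λₙ and a signed measure ν on a finite Ω with ∑ν = 1, with P_{(s₁,…,s_N)}(λ₁,…,λ_N) = ν({ω : f_{n,sₙ}(ω)=λₙ ∀n})) if and only if there exists a real-valued function μ on Λ₁^{S₁} × ⋯ × Λ_N^{S_N} summing to 1 whose marginal on coordinates (s₁,…,s_N) equals P_{(s₁,…,s_N)} for every setting tuple. -/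
/-!
A deterministic model is determined by its response map `ω ↦ (f_{n,t}(ω))_{n,t}` into the
product `∏ₙ Λₙ^{Sₙ}`, and its joint distributions are the marginals of the pushforward of `ν`
along that map; so the pushforward is a master measure. Conversely a master measure `μ` is
itself a deterministic model on the product, with the coordinate projections as response
functions (transported to `Fin (card _)`, since the model's sample space lives in `Type`).
-/

open Finset

section Pushforward

variable {Ω α : Type*} [Fintype Ω] [Fintype α] [DecidableEq α]

def pushforward (Φ : Ω → α) (ν : Ω → ℝ) (a : α) : ℝ :=
  ∑ ω with Φ ω = a, ν ω

theorem sum_pushforward (Φ : Ω → α) (ν : Ω → ℝ) : ∑ a, pushforward Φ ν a = ∑ ω, ν ω :=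
  sum_fiberwise _ Φ ν

theorem sum_filter_pushforward (Φ : Ω → α) (ν : Ω → ℝ) (p : α → Prop) [DecidablePred p] :
    ∑ a with p a, pushforward Φ ν a = ∑ ω with p (Φ ω), ν ω := by
  unfold pushforward
  rw [sum_fiberwise_eq_sum_filter]
  simp only [mem_filter, mem_univ, true_and]

end Pushforward

theorem sum_filter_comp_equiv {Ω α : Type*} [Fintype Ω] [Fintype α] (e : Ω ≃ α) (μ : α → ℝ)
    (p : α → Prop) [DecidablePred p] :
    ∑ ω with p (e ω), μ (e ω) = ∑ a with p a, μ a := by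
  simp only [sum_filter]
  exact e.sum_comp fun a => if p a then μ a else 0

theorem deterministic_lqhv_iff_master_measure_general
    {N : ℕ} {S : Fin N → ℕ} {Λ : Fin N → Type*}
    [∀ n, Fintype (Λ n)] [∀ n, DecidableEq (Λ n)]
    (P : (∀ n, Fin (S n)) → (∀ n, Λ n) → ℝ) :
    (∃ (Ω : Type) (_ : Fintype Ω) (_ : DecidableEq Ω) (ν : Ω → ℝ)
        (f : ∀ n, Fin (S n) → Ω → Λ n),
      (∑ ω, ν ω) = 1 ∧
      ∀ (s : ∀ n, Fin (S n)) (x : ∀ n, Λ n),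
        P s x = ∑ ω ∈ Finset.univ.filter (fun ω : Ω => ∀ n, f n (s n) ω = x n), ν ω)
    ↔
    (∃ μ : (∀ n, Fin (S n) → Λ n) → ℝ,
      (∑ g, μ g) = 1 ∧
      ∀ (s : ∀ n, Fin (S n)) (x : ∀ n, Λ n),
        (∑ g ∈ Finset.univ.filter
            (fun g : ∀ n, Fin (S n) → Λ n => ∀ n, g n (s n) = x n), μ g) = P s x) := by
  constructor
  · rintro ⟨Ω, _, _, ν, f, hν, hP⟩
    let Φ : Ω → ∀ n, Fin (S n) → Λ n := fun ω n t => f n t ω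
    exact ⟨pushforward Φ ν, by rw [sum_pushforward, hν], fun s x => by
      rw [sum_filter_pushforward Φ ν fun g => ∀ n, g n (s n) = x n, hP]⟩
  · rintro ⟨μ, hμ, hP⟩
    let e := (Fintype.equivFin (∀ n, Fin (S n) → Λ n)).symm
    refine ⟨_, inferInstance, inferInstance, fun ω => μ (e ω), fun n t ω => e ω n t,
      by rw [e.sum_comp μ, hμ], fun s x => ?_⟩
    rw [← hP, ← sum_filter_comp_equiv e μ fun g => ∀ n, g n (s n) = x n]

/-- Proposition 2 of Loubenets: a deterministic LqHV model exists
iff there exists a master signed measure on the product of all setting-indexed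
copies of the outcome spaces returning all distributions as marginals. -/
theorem deterministic_lqhv_iff_master_measure
    {N : ℕ} {S : Fin N → ℕ} {Λ : Fin N → Type*}
    [∀ n, Fintype (Λ n)] [∀ n, DecidableEq (Λ n)] [∀ n, Nonempty (Λ n)]
    (P : (∀ n, Fin (S n)) → (∀ n, Λ n) → ℝ)
    (hpos : ∀ s x, 0 ≤ P s x) (hnorm : ∀ s, ∑ x, P s x = 1) :
    (∃ (Ω : Type) (_ : Fintype Ω) (_ : DecidableEq Ω) (ν : Ω → ℝ)
        (f : ∀ n, Fin (S n) → Ω → Λ n),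
      (∑ ω, ν ω) = 1 ∧
      ∀ (s : ∀ n, Fin (S n)) (x : ∀ n, Λ n),
        P s x = ∑ ω ∈ Finset.univ.filter (fun ω : Ω => ∀ n, f n (s n) ω = x n), ν ω)
    ↔
    (∃ μ : (∀ n, Fin (S n) → Λ n) → ℝ,
      (∑ g, μ g) = 1 ∧
      ∀ (s : ∀ n, Fin (S n)) (x : ∀ n, Λ n),
        (∑ g ∈ Finset.univ.filter
            (fun g : ∀ n, Fin (S n) → Λ n => ∀ n, g n (s n) = x n), μ g) = P s x) :=
  deterministic_lqhv_iff_master_measure_general P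
end
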